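/- Let 0 ≤ α < 1 and μ ≤ μ(α) := (1−α)²/4, and set ν = ν(α,μ) := (2/(2−α))·√(μ(α)−μ). For each n ≥ 1, the function Φ(x) = x^{(1−α)/2} J_ν(j_{ν,n} x^{(2−α)/2}) is smooth on (0,1], satisfies the ordinary differential equation −(x^α Φ'(x))' − (μ/x^{2−α}) Φ(x) = λ_{α,μ,n} Φ(x) for every x ∈ (0,1), where λ_{α,μ,n} = ((2−α)/2)² j_{ν,n}², and satisfies the boundary conditions Φ(1) = 0 and Φ(x) → 0 as x → 0⁺. -/

import Mathlib

/-!
Write `J_ν(y) = (y/2)^ν g((y/2)²)` with the entire series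
`g(t) = Σ (-1)^m t^m / (m! Γ(ν+m+1))`, which satisfies `t g'' + (ν+1) g' + g = 0`.
Then `Φ(x) = (j/2)^ν x^p g(c x^{2-α})` with `p = (1-α)/2 + (2-α)ν/2` and `c = j²/4`, and two
applications of the chain rule turn the equation for `g` into the weighted equation for `Φ`,
because `p (p + α - 1) = -μ` and `2p + 1 = (2-α)(ν+1)`. The boundary values are `J_ν(j) = 0`
and `x^p → 0` (as `p > 0`).
-/

open Filter Set

/-- The Bessel function of the first kind of order `ν`, defined via its power series
`J_ν(x) = Σ_{m≥0} ((−1)^m / (m! Γ(ν+m+1))) (x/2)^{2m+ν}` (real powers). -/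
noncomputable def besselJ (ν : ℝ) (x : ℝ) : ℝ :=
  ∑' m : ℕ, (-1 : ℝ) ^ m / (m.factorial * Real.Gamma (ν + m + 1)) *
    (x / 2) ^ (2 * (m : ℝ) + ν)

open Topology
open scoped ContDiff Nat

noncomputable section

def powSeries (b : ℕ → ℝ) (t : ℝ) : ℝ := ∑' m, b m * t ^ m

def derivCoeff (b : ℕ → ℝ) (m : ℕ) : ℝ := (m + 1) * b (m + 1)

def FactorialBounded (b : ℕ → ℝ) (K : ℝ) : Prop := ∀ m, |b m| ≤ K / m !

namespace FactorialBounded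

variable {b : ℕ → ℝ} {K : ℝ}

lemma nonneg (hb : FactorialBounded b K) : 0 ≤ K := by
  simpa using (abs_nonneg _).trans (hb 0)

lemma derivCoeff (hb : FactorialBounded b K) : FactorialBounded (derivCoeff b) K := by
  intro m
  have hm : (0 : ℝ) < m + 1 := by positivity
  calc |_root_.derivCoeff b m| = (m + 1) * |b (m + 1)| := by
        rw [_root_.derivCoeff, abs_mul, abs_of_pos hm]
    _ ≤ (m + 1) * (K / (m + 1)!) := by gcongr; exact hb _
    _ = K / m ! := by rw [Nat.factorial_succ]; push_cast; field_simp

lemma summable (hb : FactorialBounded b K) (t : ℝ) : Summable fun m => b m * t ^ m := by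
  refine .of_norm_bounded ((Real.summable_pow_div_factorial |t|).mul_left K) fun m => ?_
  rw [norm_mul, norm_pow, Real.norm_eq_abs, Real.norm_eq_abs]
  calc |b m| * |t| ^ m ≤ K / m ! * |t| ^ m := by gcongr; exact hb m
    _ = K * (|t| ^ m / m !) := by ring

lemma hasDerivAt (hb : FactorialBounded b K) (t : ℝ) :
    HasDerivAt (powSeries b) (powSeries (_root_.derivCoeff b) t) t := by
  set R := |t| + 1
  have ht : t ∈ Metric.ball (0 : ℝ) R := by simp [R]
  -- `n - 1` truncates at `n = 0`, where the derivative term vanishes.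
  have hu : Summable fun n => K * R ^ (n - 1) / (n - 1)! := by
    rw [← summable_nat_add_iff 1]
    simpa [mul_div_assoc] using (Real.summable_pow_div_factorial R).mul_left K
  have hbound : ∀ n, ∀ y ∈ Metric.ball (0 : ℝ) R,
      ‖b n * (n * y ^ (n - 1))‖ ≤ K * R ^ (n - 1) / (n - 1)! := by
    rintro (_ | m) y hy
    · simpa using div_nonneg hb.nonneg zero_le_one
    · have hyR : |y| ≤ R := by
        rw [Metric.mem_ball, Real.dist_0_eq_abs] at hy
        exact hy.le
      calc ‖b (m + 1) * ((m + 1 : ℕ) * y ^ m)‖ = |_root_.derivCoeff b m| * |y| ^ m := by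
            simp only [_root_.derivCoeff, norm_mul, norm_pow, Real.norm_eq_abs, abs_mul]
            push_cast
            rw [abs_of_pos (by positivity : (0 : ℝ) < m + 1)]
            ring
        _ ≤ K / m ! * R ^ m := mul_le_mul (hb.derivCoeff m)
            (pow_le_pow_left₀ (abs_nonneg y) hyR m) (by positivity)
            (div_nonneg hb.nonneg (by positivity))
        _ = K * R ^ (m + 1 - 1) / (m + 1 - 1)! := by simp [mul_div_right_comm]
  have H := hasDerivAt_tsum_of_isPreconnected hu Metric.isOpen_ball
    (convex_ball (0 : ℝ) R).isPreconnected (fun n y _ => (hasDerivAt_pow n y).const_mul (b n))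
    hbound (Metric.mem_ball_self (by positivity)) (hb.summable 0) ht
  have hsum : Summable fun n => b n * (n * t ^ (n - 1)) :=
    .of_norm_bounded hu fun n => hbound n t ht
  have hderiv : ∑' n, b n * (n * t ^ (n - 1)) = powSeries (_root_.derivCoeff b) t := by
    rw [hsum.tsum_eq_zero_add, powSeries]
    simp [_root_.derivCoeff, mul_comm, mul_left_comm]
  rwa [hderiv] at H

lemma contDiff (hb : FactorialBounded b K) : ContDiff ℝ ∞ (powSeries b) := by
  refine contDiff_infty.2 fun n => ?_
  induction n generalizing b with
  | zero =>
    exact contDiff_zero.2 (continuous_iff_continuousAt.2 fun t => (hb.hasDerivAt t).continuousAt)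
  | succ n ih =>
    rw [Nat.cast_add_one, contDiff_succ_iff_deriv]
    refine ⟨fun t => (hb.hasDerivAt t).differentiableAt, by simp, ?_⟩
    rw [show deriv (powSeries b) = powSeries (_root_.derivCoeff b) from
      funext fun t => (hb.hasDerivAt t).deriv]
    exact ih hb.derivCoeff

end FactorialBounded

lemma hasSum_mul_powSeries_derivCoeff {b : ℕ → ℝ} {t : ℝ}
    (hb : Summable fun m => derivCoeff b m * t ^ m) :
    HasSum (fun m => m * b m * t ^ m) (t * powSeries (derivCoeff b) t) := by
  have h := (hb.hasSum.mul_left t).congr_fun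
    (g := fun m => (m + 1 : ℕ) * b (m + 1) * t ^ (m + 1)) fun m => by
      simp only [derivCoeff]; push_cast; ring
  exact (hasSum_nat_add_iff' 1).1 (by simpa [powSeries] using h)

lemma Real.Gamma_le_Gamma_add_nat {x : ℝ} (hx : 1 ≤ x) (n : ℕ) :
    Real.Gamma x ≤ Real.Gamma (x + n) := by
  induction n with
  | zero => simp
  | succ n ih =>
    have hxn : 1 ≤ x + n := by linarith [n.cast_nonneg (α := ℝ)]
    rw [Nat.cast_add_one, ← add_assoc, Real.Gamma_add_one (by linarith)]
    nlinarith [Real.Gamma_pos_of_pos (by linarith : 0 < x + n)]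

def besselCoeff (ν : ℝ) (m : ℕ) : ℝ := (-1) ^ m / (m ! * Real.Gamma (ν + m + 1))

def besselSeries (ν : ℝ) : ℝ → ℝ := powSeries (besselCoeff ν)

section besselSeries

variable {ν : ℝ}

lemma factorialBounded_besselCoeff (hν : 0 ≤ ν) :
    FactorialBounded (besselCoeff ν) (Real.Gamma (ν + 1))⁻¹ := by
  intro m
  have hΓ : 0 < Real.Gamma (ν + 1) := Real.Gamma_pos_of_pos (by linarith)
  have hΓm : Real.Gamma (ν + 1) ≤ Real.Gamma (ν + m + 1) := by
    simpa [add_right_comm] using Real.Gamma_le_Gamma_add_nat (by linarith : 1 ≤ ν + 1) m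
  rw [besselCoeff, abs_div, abs_pow, abs_neg, abs_one, one_pow, abs_of_pos (by positivity)]
  calc 1 / (m ! * Real.Gamma (ν + m + 1)) ≤ 1 / (m ! * Real.Gamma (ν + 1)) := by gcongr
    _ = (Real.Gamma (ν + 1))⁻¹ / m ! := by ring

lemma besselCoeff_succ (hν : -1 < ν) (m : ℕ) :
    (m + 1) * (ν + m + 1) * besselCoeff ν (m + 1) = -besselCoeff ν m := by
  have hνm : 0 < ν + m + 1 := by linarith [m.cast_nonneg (α := ℝ)]
  have hΓ := Real.Gamma_pos_of_pos hνm
  rw [besselCoeff, besselCoeff, Nat.factorial_succ, Nat.cast_mul, Nat.cast_add_one,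
    ← add_assoc ν, Real.Gamma_add_one hνm.ne', pow_succ]
  field_simp

lemma besselSeries_ode (hν : 0 ≤ ν) (t : ℝ) :
    t * powSeries (derivCoeff (derivCoeff (besselCoeff ν))) t
      + (ν + 1) * powSeries (derivCoeff (besselCoeff ν)) t + besselSeries ν t = 0 := by
  have hb := factorialBounded_besselCoeff hν
  have h := ((hasSum_mul_powSeries_derivCoeff (hb.derivCoeff.derivCoeff.summable t)).add
    ((hb.derivCoeff.summable t).hasSum.mul_left (ν + 1))).add (hb.summable t).hasSum
  refine h.unique (hasSum_zero.congr_fun fun m => ?_)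
  simp only [derivCoeff]
  linear_combination t ^ m * besselCoeff_succ (by linarith) m

lemma besselJ_eq_rpow_mul_besselSeries {y : ℝ} (hy : 0 < y) :
    besselJ ν y = (y / 2) ^ ν * besselSeries ν ((y / 2) ^ 2) := by
  rw [besselJ, besselSeries, powSeries, ← tsum_mul_left]
  refine tsum_congr fun m => ?_
  rw [Real.rpow_add (by positivity), show 2 * (m : ℝ) = (2 * m : ℕ) by push_cast; ring,
    Real.rpow_natCast, pow_mul, besselCoeff]
  ring

end besselSeries

def rpowMulComp (p c β : ℝ) (g : ℝ → ℝ) (x : ℝ) : ℝ := x ^ p * g (c * x ^ β)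

section rpowMulComp

variable {p c β x : ℝ} {g g₁ g₂ : ℝ → ℝ}

lemma rpow_mul_rpowMulComp (hx : 0 < x) (a : ℝ) :
    x ^ a * rpowMulComp p c β g x = rpowMulComp (a + p) c β g x := by
  rw [rpowMulComp, rpowMulComp, Real.rpow_add hx, mul_assoc]

lemma hasDerivAt_rpowMulComp (hx : 0 < x) (hg : HasDerivAt g (g₁ (c * x ^ β)) (c * x ^ β)) :
    HasDerivAt (rpowMulComp p c β g)
      (p * rpowMulComp (p - 1) c β g x + c * β * rpowMulComp (p + β - 1) c β g₁ x) x := by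
  have hinner := (Real.hasDerivAt_rpow_const (p := β) (Or.inl hx.ne')).const_mul c
  have hpow := Real.hasDerivAt_rpow_const (p := p) (Or.inl hx.ne')
  refine (hpow.mul (hg.comp x hinner)).congr_deriv ?_
  rw [rpowMulComp, rpowMulComp, add_sub_assoc, Real.rpow_add hx, Function.comp_apply]
  ring

lemma contDiffAt_rpowMulComp {n : WithTop ℕ∞} (hg : ContDiff ℝ n g) (hx : 0 < x) :
    ContDiffAt ℝ n (rpowMulComp p c β g) x :=
  (Real.contDiffAt_rpow_const_of_ne hx.ne').mul
    (hg.contDiffAt.comp x (contDiffAt_const.mul (Real.contDiffAt_rpow_const_of_ne hx.ne')))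

lemma tendsto_rpowMulComp_nhdsGT_zero (hp : 0 < p) (hβ : 0 < β) (hg : Continuous g) :
    Tendsto (rpowMulComp p c β g) (𝓝[>] 0) (𝓝 0) := by
  have hcont : ContinuousAt (rpowMulComp p c β g) 0 :=
    (Real.continuousAt_rpow_const 0 p (Or.inr hp.le)).mul
      (hg.continuousAt.comp
        (continuousAt_const.mul (Real.continuousAt_rpow_const 0 β (Or.inr hβ.le))))
  simpa [rpowMulComp, Real.zero_rpow hp.ne'] using hcont.tendsto.mono_left nhdsWithin_le_nhds

theorem rpowMulComp_weighted_ode {α ν : ℝ} (hg : ∀ t, HasDerivAt g (g₁ t) t)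
    (hg₁ : ∀ t, HasDerivAt g₁ (g₂ t) t) (hode : ∀ t, t * g₂ t + (ν + 1) * g₁ t + g t = 0)
    (hp : 2 * p = 1 - α + (2 - α) * ν) (hx : 0 < x) :
    ∃ w, HasDerivAt (fun y => y ^ α * (p * rpowMulComp (p - 1) c (2 - α) g y
        + c * (2 - α) * rpowMulComp (p + (2 - α) - 1) c (2 - α) g₁ y)) w x ∧
      -w + p * (p + α - 1) / x ^ (2 - α) * rpowMulComp p c (2 - α) g x
        = c * (2 - α) ^ 2 * rpowMulComp p c (2 - α) g x := by
  have heq : (fun y => y ^ α * (p * rpowMulComp (p - 1) c (2 - α) g y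
        + c * (2 - α) * rpowMulComp (p + (2 - α) - 1) c (2 - α) g₁ y)) =ᶠ[𝓝 x]
      fun y => p * rpowMulComp (α + (p - 1)) c (2 - α) g y
        + c * (2 - α) * rpowMulComp (α + (p + (2 - α) - 1)) c (2 - α) g₁ y := by
    filter_upwards [Ioi_mem_nhds hx] with y hy
    rw [← rpow_mul_rpowMulComp hy, ← rpow_mul_rpowMulComp hy]
    ring
  refine ⟨_, (((hasDerivAt_rpowMulComp hx (hg _)).const_mul p).add
    ((hasDerivAt_rpowMulComp hx (hg₁ _)).const_mul (c * (2 - α)))).congr_of_eventuallyEq heq, ?_⟩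
  rw [show α + (p - 1) - 1 = p - (2 - α) by ring, show α + (p - 1) + (2 - α) - 1 = p by ring,
    show α + (p + (2 - α) - 1) - 1 = p by ring,
    show α + (p + (2 - α) - 1) + (2 - α) - 1 = p + (2 - α) by ring]
  simp only [rpowMulComp]
  rw [Real.rpow_sub hx, Real.rpow_add hx]
  -- The `g₁` terms cancel since `2p + 1 = (2 - α)(ν + 1)`; what remains is `hode` at `c x^{2-α}`.
  linear_combination (-c * (2 - α) ^ 2 * x ^ p) * hode (c * x ^ (2 - α))
    - c * (2 - α) * x ^ p * g₁ (c * x ^ (2 - α)) * hp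

end rpowMulComp

lemma rpow_mul_besselJ_eq_rpowMulComp {ν j a β x : ℝ} (hj : 0 < j) (hx : 0 < x) :
    x ^ a * besselJ ν (j * x ^ (β / 2))
      = rpowMulComp (a + β * ν / 2) (j ^ 2 / 4) β (fun t => (j / 2) ^ ν * besselSeries ν t) x := by
  have hxβ : 0 < x ^ (β / 2) := Real.rpow_pos_of_pos hx _
  have hsq : (j / 2 * x ^ (β / 2)) ^ 2 = j ^ 2 / 4 * x ^ β := by
    rw [mul_pow, div_pow, ← Real.rpow_natCast (x ^ (β / 2)) 2, ← Real.rpow_mul hx.le]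
    norm_num
  rw [besselJ_eq_rpow_mul_besselSeries (by positivity), rpowMulComp, Real.rpow_add hx,
    mul_div_right_comm j, Real.mul_rpow (by positivity) hxβ.le, ← Real.rpow_mul hx.le, hsq,
    show β / 2 * ν = β * ν / 2 by ring]
  ring

end

theorem stmt_4_general (α μ : ℝ) (hα1 : α < 1) (hμ : μ ≤ (1 - α) ^ 2 / 4)
    (ν : ℝ) (hν : ν = 2 / (2 - α) * Real.sqrt ((1 - α) ^ 2 / 4 - μ))
    (j : ℝ) (hj : 0 < j) (hjzero : besselJ ν j = 0)
    (lam : ℝ) (hlam : lam = ((2 - α) / 2) ^ 2 * j ^ 2)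
    (Φ : ℝ → ℝ)
    (hΦ : Φ = fun x : ℝ => x ^ ((1 - α) / 2) * besselJ ν (j * x ^ ((2 - α) / 2))) :
    ContDiffOn ℝ (⊤ : ℕ∞) Φ (Set.Ioc (0 : ℝ) 1) ∧
    (∃ Φ' : ℝ → ℝ,
      (∀ x ∈ Set.Ioo (0 : ℝ) 1, HasDerivAt Φ (Φ' x) x) ∧
      (∀ x ∈ Set.Ioo (0 : ℝ) 1, ∃ w : ℝ,
        HasDerivAt (fun y : ℝ => y ^ α * Φ' y) w x ∧
        -w - μ / x ^ (2 - α) * Φ x = lam * Φ x)) ∧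
    Φ 1 = 0 ∧
    Tendsto Φ (nhdsWithin 0 (Set.Ioi (0 : ℝ))) (nhds 0) := by
  have hβ : 0 < 2 - α := by linarith
  have hν0 : 0 ≤ ν := hν ▸ by positivity
  have hνμ : ((2 - α) * ν / 2) ^ 2 = (1 - α) ^ 2 / 4 - μ := by
    rw [show (2 - α) * ν / 2 = √((1 - α) ^ 2 / 4 - μ) by rw [hν]; field_simp]
    exact Real.sq_sqrt (by linarith)
  set p := (1 - α) / 2 + (2 - α) * ν / 2
  have hp : 0 < p := by positivity
  set c := j ^ 2 / 4
  have hb := factorialBounded_besselCoeff hν0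
  set G := fun t => (j / 2) ^ ν * besselSeries ν t
  set G₁ := fun t => (j / 2) ^ ν * powSeries (derivCoeff (besselCoeff ν)) t
  set G₂ := fun t => (j / 2) ^ ν * powSeries (derivCoeff (derivCoeff (besselCoeff ν))) t
  have hG (t : ℝ) : HasDerivAt G (G₁ t) t := (hb.hasDerivAt t).const_mul _
  have hG₁ (t : ℝ) : HasDerivAt G₁ (G₂ t) t := (hb.derivCoeff.hasDerivAt t).const_mul _
  have hG_smooth : ContDiff ℝ ∞ G := contDiff_const.mul hb.contDiff
  have hΦG : ∀ x, 0 < x → Φ =ᶠ[𝓝 x] rpowMulComp p c (2 - α) G := fun x hx =>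
    eventually_of_mem (Ioi_mem_nhds hx) fun y hy => by
      rw [hΦ]; exact rpow_mul_besselJ_eq_rpowMulComp hj hy
  refine ⟨fun x hx => ((contDiffAt_rpowMulComp hG_smooth hx.1).congr_of_eventuallyEq
      (hΦG x hx.1)).contDiffWithinAt,
    ⟨_, fun x hx => (hasDerivAt_rpowMulComp hx.1 (hG _)).congr_of_eventuallyEq (hΦG x hx.1),
      fun x hx => ?_⟩,
    by simp [hΦ, hjzero],
    (tendsto_rpowMulComp_nhdsGT_zero hp hβ hG_smooth.continuous).congr'
      (eventually_nhdsWithin_of_forall fun y hy => ((hΦG y hy).eq_of_nhds).symm)⟩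
  obtain ⟨w, hw, hw_eq⟩ := rpowMulComp_weighted_ode (α := α) (ν := ν) (p := p) (c := c) hG hG₁
    (fun t => by linear_combination (j / 2) ^ ν * besselSeries_ode hν0 t) (by ring) hx.1
  refine ⟨w, hw, ?_⟩
  rw [(hΦG x hx.1).eq_of_nhds, hlam]
  linear_combination hw_eq - rpowMulComp p c (2 - α) G x / x ^ (2 - α) * hνμ

/-- For `0 ≤ α < 1`, `μ ≤ (1−α)²/4`, `ν = (2/(2−α))√((1−α)²/4 − μ)`
and a positive zero `j` of `J_ν`, the function `Φ(x) = x^{(1−α)/2} J_ν(j x^{(2−α)/2})`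
is smooth on `(0,1]`, satisfies `−(x^α Φ')' − (μ/x^{2−α}) Φ = λ Φ` on `(0,1)` with
`λ = ((2−α)/2)² j²`, and satisfies `Φ(1) = 0` and `Φ(x) → 0` as `x → 0⁺`. -/
theorem stmt_4 (α μ : ℝ) (hα0 : 0 ≤ α) (hα1 : α < 1) (hμ : μ ≤ (1 - α) ^ 2 / 4)
    (ν : ℝ) (hν : ν = 2 / (2 - α) * Real.sqrt ((1 - α) ^ 2 / 4 - μ))
    (j : ℝ) (hj : 0 < j) (hjzero : besselJ ν j = 0)
    (lam : ℝ) (hlam : lam = ((2 - α) / 2) ^ 2 * j ^ 2)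
    (Φ : ℝ → ℝ)
    (hΦ : Φ = fun x : ℝ => x ^ ((1 - α) / 2) * besselJ ν (j * x ^ ((2 - α) / 2))) :
    ContDiffOn ℝ (⊤ : ℕ∞) Φ (Set.Ioc (0 : ℝ) 1) ∧
    (∃ Φ' : ℝ → ℝ,
      (∀ x ∈ Set.Ioo (0 : ℝ) 1, HasDerivAt Φ (Φ' x) x) ∧
      (∀ x ∈ Set.Ioo (0 : ℝ) 1, ∃ w : ℝ,
        HasDerivAt (fun y : ℝ => y ^ α * Φ' y) w x ∧
        -w - μ / x ^ (2 - α) * Φ x = lam * Φ x)) ∧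
    Φ 1 = 0 ∧
    Tendsto Φ (nhdsWithin 0 (Set.Ioi (0 : ℝ))) (nhds 0) :=
  stmt_4_general α μ hα1 hμ ν hν j hj hjzero lam hlam Φ hΦ
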